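/- The function ξ is strictly increasing on (1,∞) and lim_{t→∞} ξ(t) = 1. -/

import Mathlib

/-!
Write `a = e^{-v}`, `b = e^{-u}` and `x = v - u`. The root equations give `b = a e^x` and
`b - a = x`, so `a` and `b`, hence `ξ`, are explicit functions of the gap `x` alone. The gap
increases with `t`, since `v` increases and `u` decreases. The explicit function of `x` has a
positive derivative: after cubing, this reduces to `3y < tanh y + 2 sinh y` for `y = x/3 > 0`,
which holds because `(tanh + 2 sinh)' = 1/cosh² + 2 cosh ≥ 3`. For the limit,
`e^{-v} ≤ e^{1-t} → 0` and `e^{-u} ≥ t → ∞`.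
-/

open Filter Set Real

theorem three_mul_lt_tanh_add_two_mul_sinh {y : ℝ} (hy : 0 < y) :
    3 * y < tanh y + 2 * sinh y := by
  have hderiv (s : ℝ) : HasDerivAt (fun s => sinh s / cosh s + 2 * sinh s - 3 * s)
      (1 / cosh s ^ 2 + 2 * cosh s - 3) s := by
    have h := (((hasDerivAt_sinh s).div (hasDerivAt_cosh s) (cosh_pos s).ne').add
      ((hasDerivAt_sinh s).const_mul 2)).sub ((hasDerivAt_id s).const_mul 3)
    refine h.congr_deriv ?_
    have hc := (cosh_pos s).ne'
    field_simp
    nlinarith [cosh_sq_sub_sinh_sq s]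
  have hmono : StrictMonoOn (fun s => sinh s / cosh s + 2 * sinh s - 3 * s) (Ici 0) := by
    refine strictMonoOn_of_deriv_pos (convex_Ici 0)
      (fun s _ => (hderiv s).continuousAt.continuousWithinAt) fun s hs => ?_
    rw [interior_Ici, mem_Ioi] at hs
    have hc : 1 < cosh s := one_lt_cosh.2 hs.ne'
    rw [(hderiv s).deriv, show 1 / cosh s ^ 2 + 2 * cosh s - 3
      = (cosh s - 1) ^ 2 * (2 * cosh s + 1) / cosh s ^ 2 by field_simp; ring]
    exact div_pos (mul_pos (pow_pos (by linarith) 2) (by linarith)) (by positivity)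
  have := hmono self_mem_Ici hy.le hy
  simp only [sinh_zero, cosh_zero, zero_div, mul_zero, sub_zero, add_zero] at this
  rw [tanh_eq_sinh_div_cosh]
  linarith

theorem mul_exp_sub_exp_add_one_lt_exp_div_three_mul {x : ℝ} (hx : 0 < x) :
    x * exp x - exp x + 1 < exp (x / 3) * (exp x - 1 - x) := by
  have h := three_mul_lt_tanh_add_two_mul_sinh (by positivity : 0 < x / 3)
  rw [tanh_eq_sinh_div_cosh, sinh_eq, cosh_eq, exp_neg] at h
  have hcube : exp x = exp (x / 3) ^ 3 := by rw [← exp_nat_mul]; ring_nf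
  rw [hcube]
  set E := exp (x / 3)
  have hE : 0 < E := exp_pos _
  field_simp at h
  nlinarith [h]

theorem exp_sub_one_sub_pos {x : ℝ} (hx : 0 < x) : 0 < exp x - 1 - x := by
  linarith [add_one_lt_exp hx.ne']

theorem mul_exp_sub_exp_add_one_pos {x : ℝ} (hx : 0 < x) : 0 < x * exp x - exp x + 1 := by
  have h := add_one_lt_exp (neg_ne_zero.2 hx.ne')
  rw [exp_neg] at h
  have := exp_pos x
  field_simp at h
  linarith

noncomputable def xiOfGap (x : ℝ) : ℝ :=
  (exp x - 1) / (exp x - 1 - x) - (exp x - 1) / (x * exp x - exp x + 1)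

theorem hasDerivAt_xiOfGap {x : ℝ} (hx : 0 < x) :
    HasDerivAt xiOfGap
      (exp x * (exp x - 1 - x) / (x * exp x - exp x + 1) ^ 2
        - (x * exp x - exp x + 1) / (exp x - 1 - x) ^ 2) x := by
  have hP := (exp_sub_one_sub_pos hx).ne'
  have hQ := (mul_exp_sub_exp_add_one_pos hx).ne'
  have hnum := (hasDerivAt_exp x).sub_const 1
  have hPd := hnum.sub (hasDerivAt_id x)
  have hQd := (((hasDerivAt_id x).mul (hasDerivAt_exp x)).sub (hasDerivAt_exp x)).add_const 1
  refine ((hnum.div hPd hP).sub (hnum.div hQd hQ)).congr_deriv ?_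
  simp only [Pi.sub_apply, Pi.mul_apply, id_eq, one_mul]
  have hP2 := pow_ne_zero 2 hP
  have hQ2 := pow_ne_zero 2 hQ
  rw [div_sub_div _ _ hP2 hQ2, div_sub_div _ _ hQ2 hP2,
    div_eq_div_iff (mul_ne_zero hP2 hQ2) (mul_ne_zero hQ2 hP2)]
  ring

theorem strictMonoOn_xiOfGap : StrictMonoOn xiOfGap (Ioi 0) := by
  refine strictMonoOn_of_deriv_pos (convex_Ioi 0)
    (fun x hx => (hasDerivAt_xiOfGap hx).continuousAt.continuousWithinAt) fun x hx => ?_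
  rw [interior_Ioi] at hx
  have hP := exp_sub_one_sub_pos hx
  have hQ := mul_exp_sub_exp_add_one_pos hx
  rw [(hasDerivAt_xiOfGap hx).deriv, sub_pos, div_lt_div_iff₀ (by positivity) (by positivity)]
  have hcube : (x * exp x - exp x + 1) ^ 3 < exp x * (exp x - 1 - x) ^ 3 := by
    calc (x * exp x - exp x + 1) ^ 3 < (exp (x / 3) * (exp x - 1 - x)) ^ 3 :=
          pow_lt_pow_left₀ (mul_exp_sub_exp_add_one_lt_exp_div_three_mul hx) hQ.le three_ne_zero
      _ = exp x * (exp x - 1 - x) ^ 3 := by rw [mul_pow, ← exp_nat_mul]; ring_nf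
  nlinarith [hcube]

theorem one_div_one_sub_exp_neg_add_eq_xiOfGap {a b : ℝ} (h : exp (-a) + a = exp (-b) + b)
    (hba : b < a) : 1 / (1 - exp (-a)) + 1 / (1 - exp (-b)) = xiOfGap (a - b) := by
  have hX : 0 < a - b := sub_pos.2 hba
  have hE : 1 < exp (a - b) := one_lt_exp_iff.2 hX
  -- this turns the root equation into a linear equation for `exp (-a)`
  have hb : exp (-b) = exp (-a) * exp (a - b) := by rw [← exp_add]; ring_nf
  have ha : exp (-a) = (a - b) / (exp (a - b) - 1) := by
    rw [eq_div_iff (by linarith)]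
    linarith
  rw [hb, ha, xiOfGap]
  set X := a - b
  set E := exp X
  have hE1 : E - 1 ≠ 0 := by linarith
  have e₁ : 1 - X / (E - 1) = (E - 1 - X) / (E - 1) := by field_simp
  have e₂ : 1 - X / (E - 1) * E = -((X * E - E + 1) / (E - 1)) := by field_simp; ring
  rw [e₁, e₂, one_div_div, div_neg, one_div_div]
  ring

theorem hasDerivAt_exp_neg_add_self (s : ℝ) :
    HasDerivAt (fun s => exp (-s) + s) (1 - exp (-s)) s :=
  ((hasDerivAt_neg s).exp.add (hasDerivAt_id s)).congr_deriv (by ring)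

theorem strictMonoOn_exp_neg_add_self : StrictMonoOn (fun s => exp (-s) + s) (Ici 0) := by
  refine strictMonoOn_of_deriv_pos (convex_Ici 0) (by fun_prop) fun s hs => ?_
  rw [interior_Ici, mem_Ioi] at hs
  rw [(hasDerivAt_exp_neg_add_self s).deriv, sub_pos, exp_lt_one_iff]
  linarith

theorem strictAntiOn_exp_neg_add_self : StrictAntiOn (fun s => exp (-s) + s) (Iic 0) := by
  refine strictAntiOn_of_deriv_neg (convex_Iic 0) (by fun_prop) fun s hs => ?_
  rw [interior_Iic, mem_Iio] at hs
  rw [(hasDerivAt_exp_neg_add_self s).deriv, sub_neg, one_lt_exp_iff]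
  linarith

theorem tendsto_one_div_one_sub_add_one_div_one_sub {α : Type*} {l : Filter α} {a b : α → ℝ}
    (ha : Tendsto a l (nhds 0)) (hb : Tendsto b l atTop) :
    Tendsto (fun t => 1 / (1 - a t) + 1 / (1 - b t)) l (nhds 1) := by
  have h₁ : Tendsto (fun t => 1 / (1 - a t)) l (nhds 1) := by
    simpa using (tendsto_const_nhds.sub ha).inv₀ (by norm_num : (1 : ℝ) - 0 ≠ 0)
  have h₂ : Tendsto (fun t => 1 / (1 - b t)) l (nhds 0) := by
    have h : Tendsto (fun t => 1 - b t) l atBot := by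
      simpa only [sub_eq_add_neg, Function.comp_def] using
        tendsto_atBot_add_const_left l 1 (tendsto_neg_atTop_atBot.comp hb)
    simpa only [one_div, Function.comp_def] using tendsto_inv_atBot_zero.comp h
  simpa using h₁.add h₂

theorem StrictMonoOn.strictMonoOn_of_leftInvOn {α β : Type*} [LinearOrder α] [Preorder β]
    {g : α → β} {w : β → α} {s : Set α} {t : Set β} (hg : StrictMonoOn g s)
    (hw : MapsTo w t s) (hgw : LeftInvOn g w t) : StrictMonoOn w t := fun x hx y hy hxy =>
  (hg.lt_iff_lt (hw hx) (hw hy)).1 (by rwa [hgw hx, hgw hy])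

theorem StrictAntiOn.strictAntiOn_of_leftInvOn {α β : Type*} [LinearOrder α] [Preorder β]
    {g : α → β} {w : β → α} {s : Set α} {t : Set β} (hg : StrictAntiOn g s)
    (hw : MapsTo w t s) (hgw : LeftInvOn g w t) : StrictAntiOn w t := fun x hx y hy hxy =>
  (hg.lt_iff_gt (hw hx) (hw hy)).1 (by rwa [hgw hx, hgw hy])

/-- The function `ξ` is strictly increasing on `(1,∞)` and
`lim_{t→∞} ξ(t) = 1`.  Here `u t ≤ 0 ≤ v t` are the two solutions of `e^{-s} + s = t`
for `t ≥ 1`, and `ξ(t) = 1/(1 − e^{-v t}) + 1/(1 − e^{-u t})` for `t > 1`. -/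
theorem xi_strictMono_and_limit (u v ξ : ℝ → ℝ)
    (hu : ∀ t ≥ (1:ℝ), u t ≤ 0 ∧ Real.exp (-(u t)) + u t = t)
    (hv : ∀ t ≥ (1:ℝ), 0 ≤ v t ∧ Real.exp (-(v t)) + v t = t)
    (hξ : ∀ t > (1:ℝ),
      ξ t = 1/(1 - Real.exp (-(v t))) + 1/(1 - Real.exp (-(u t)))) :
    StrictMonoOn ξ (Set.Ioi 1) ∧ Tendsto ξ atTop (nhds 1) := by
  have hv_mono : StrictMonoOn v (Ici 1) := strictMonoOn_exp_neg_add_self.strictMonoOn_of_leftInvOn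
    (fun t ht => (hv t ht).1) fun t ht => (hv t ht).2
  have hu_anti : StrictAntiOn u (Ici 1) := strictAntiOn_exp_neg_add_self.strictAntiOn_of_leftInvOn
    (fun t ht => (hu t ht).1) fun t ht => (hu t ht).2
  have hgap : StrictMonoOn (fun t => v t - u t) (Ici 1) := by
    simpa only [sub_eq_add_neg] using hv_mono.add hu_anti.neg
  have hgap_pos (t : ℝ) (ht : 1 < t) : 0 < v t - u t :=
    lt_of_le_of_lt (by linarith [(hv 1 le_rfl).1, (hu 1 le_rfl).1])
      (hgap self_mem_Ici (mem_Ici.2 ht.le) ht)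
  have hξ_eq : EqOn (xiOfGap ∘ fun t => v t - u t) ξ (Ioi 1) := fun t ht =>
    ((hξ t ht).trans (one_div_one_sub_exp_neg_add_eq_xiOfGap
      ((hv t (le_of_lt ht)).2.trans (hu t (le_of_lt ht)).2.symm)
      (sub_pos.1 (hgap_pos t ht)))).symm
  refine ⟨(strictMonoOn_xiOfGap.comp (hgap.mono Ioi_subset_Ici_self) hgap_pos).congr hξ_eq, ?_⟩
  have hexp_v : Tendsto (fun t => exp (-v t)) atTop (nhds 0) := by
    refine tendsto_exp_neg_atTop_nhds_zero.comp (tendsto_atTop_mono' _ ?_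
      (tendsto_atTop_add_const_right _ (-1) tendsto_id))
    filter_upwards [eventually_ge_atTop 1] with t ht
    show t + -1 ≤ v t
    linarith [(hv t ht).2, exp_le_one_iff.2 (neg_nonpos.2 (hv t ht).1)]
  have hexp_u : Tendsto (fun t => exp (-u t)) atTop atTop := by
    refine tendsto_atTop_mono' _ ?_ tendsto_id
    filter_upwards [eventually_ge_atTop 1] with t ht
    show t ≤ exp (-u t)
    linarith [(hu t ht).1, (hu t ht).2]
  refine (tendsto_one_div_one_sub_add_one_div_one_sub hexp_v hexp_u).congr' ?_
  filter_upwards [eventually_gt_atTop 1] with t ht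
  exact (hξ t ht).symm
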